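/- If a linear functional ⟨·⟩ on operators on Sym^M(H) satisfies ⟨Γ(U_θ)* X Γ(U_θ)⟩ = ⟨X⟩ for all θ ∈ ℝ^N with U_θ = Σ_k e^{iθ_k} p_{ψ_k}, then ⟨dΓ(p_{ψ_m} p_a p_{ψ_k})⟩ = 0 for all m ≠ k. -/

import Mathlib

open Complex Finset
open scoped InnerProductSpace

noncomputable section

variable {H : Type*} [NormedAddCommGroup H] [InnerProductSpace ℂ H] [FiniteDimensional ℂ H]

/-- The rank-one operator `|u⟩⟨v|`. -/
def rankOne (u v : H) : H →ₗ[ℂ] H where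
  toFun x := ⟪v, x⟫_ℂ • u
  map_add' x y := by simp [inner_add_right, add_smul]
  map_smul' c x := by simp [inner_smul_right, smul_smul]

/-- The phase unitary `U(θ) = Σ_n e^{iθ_n} |a_n⟩⟨a_n|`. -/
def phaseU {N : ℕ} (a : OrthonormalBasis (Fin N) ℂ H) (θ : Fin N → ℝ) : H →ₗ[ℂ] H :=
  ∑ n, Complex.exp ((θ n : ℂ) * Complex.I) • rankOne (a n) (a n)

/-! Conjugation by `Γ(U)` acts on `dΓ` as `dΓ X ↦ dΓ (U* X U)`, and `Γ(U)* = Γ(U*)` because the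
inner product of `Sym^M(H)` is a permanent of one-particle inner products. For `θ = π e_k`
one has `U_θ* |ψ_m⟩⟨ψ_k| U_θ = -|ψ_m⟩⟨ψ_k|` when `m ≠ k`, so invariance forces
`⟨dΓ(|ψ_m⟩⟨ψ_k|)⟩ = 0`; and `p_{ψ_m} p_a p_{ψ_k}` is a multiple of `|ψ_m⟩⟨ψ_k|`. -/

omit [FiniteDimensional ℂ H] in
theorem rankOne_apply (u v x : H) : rankOne u v x = ⟪v, x⟫_ℂ • u := rfl

omit [FiniteDimensional ℂ H] in
theorem rankOne_mul_rankOne (u v w z : H) :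
    rankOne u v * rankOne w z = ⟪v, w⟫_ℂ • rankOne u z := by
  ext x
  simp only [Module.End.mul_apply, LinearMap.smul_apply, rankOne_apply, inner_smul_right,
    smul_smul, mul_comm]

section phaseU

variable {N : ℕ} (ψ : OrthonormalBasis (Fin N) ℂ H) (θ : Fin N → ℝ)

omit [FiniteDimensional ℂ H] in
theorem phaseU_apply_basis (j : Fin N) :
    phaseU ψ θ (ψ j) = exp (θ j * I) • ψ j := by
  simp only [phaseU, LinearMap.sum_apply, LinearMap.smul_apply, rankOne_apply,
    orthonormal_iff_ite.mp ψ.orthonormal, ite_smul, one_smul, zero_smul, smul_ite, smul_zero,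
    Finset.sum_ite_eq', Finset.mem_univ, if_true]

theorem adjoint_phaseU : LinearMap.adjoint (phaseU ψ θ) = phaseU ψ (-θ) := by
  refine ((LinearMap.eq_adjoint_iff_basis ψ.toBasis ψ.toBasis _ _).mpr fun i j => ?_).symm
  simp only [OrthonormalBasis.coe_toBasis, phaseU_apply_basis, inner_smul_left, inner_smul_right,
    orthonormal_iff_ite.mp ψ.orthonormal]
  split_ifs with h
  · subst h
    simp [← exp_conj]
  · simp

omit [FiniteDimensional ℂ H] in
theorem phaseU_neg_mul_phaseU : phaseU ψ (-θ) * phaseU ψ θ = 1 := by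
  refine ψ.toBasis.ext fun j => ?_
  simp only [OrthonormalBasis.coe_toBasis, Module.End.mul_apply, Module.End.one_apply,
    phaseU_apply_basis, map_smul, smul_smul, ← exp_add, Pi.neg_apply]
  simp

omit [FiniteDimensional ℂ H] in
theorem phaseU_conj_rankOne (m k : Fin N) :
    phaseU ψ (-θ) * rankOne (ψ m) (ψ k) * phaseU ψ θ
      = exp ((θ k - θ m : ℝ) * I) • rankOne (ψ m) (ψ k) := by
  refine ψ.toBasis.ext fun j => ?_
  simp only [OrthonormalBasis.coe_toBasis, Module.End.mul_apply, LinearMap.smul_apply,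
    rankOne_apply, phaseU_apply_basis, map_smul, smul_smul,
    orthonormal_iff_ite.mp ψ.orthonormal]
  split_ifs with h
  · subst h
    rw [one_mul, mul_one, ← exp_add, Pi.neg_apply]
    congr 2
    push_cast
    ring
  · simp

end phaseU

theorem LinearMap.eq_adjoint_of_span_range {F ι : Type*} [NormedAddCommGroup F]
    [InnerProductSpace ℂ F] [FiniteDimensional ℂ F] {v : ι → F}
    (hv : Submodule.span ℂ (Set.range v) = ⊤) (A B : F →ₗ[ℂ] F)
    (h : ∀ i j, ⟪A (v i), v j⟫_ℂ = ⟪v i, B (v j)⟫_ℂ) : A = LinearMap.adjoint B := by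
  have h_right : ∀ x j, ⟪A x, v j⟫_ℂ = ⟪x, B (v j)⟫_ℂ := by
    intro x j
    have : (innerₛₗ ℂ (v j)).comp A = innerₛₗ ℂ (B (v j)) :=
      LinearMap.ext_on_range hv fun i => by
        simp only [LinearMap.comp_apply, innerₛₗ_apply_apply]
        rw [← inner_conj_symm, h, inner_conj_symm]
    rw [← inner_conj_symm, ← inner_conj_symm x]
    exact congrArg (starRingEnd ℂ) (LinearMap.congr_fun this x)
  refine (LinearMap.eq_adjoint_iff A B).mpr fun x y => ?_
  have : innerₛₗ ℂ (A x) = (innerₛₗ ℂ x).comp B := LinearMap.ext_on_range hv (h_right x)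
  exact LinearMap.congr_fun this y

section secondQuantization

variable {M : ℕ} {F : Type*} [NormedAddCommGroup F] [InnerProductSpace ℂ F]
  {sym : MultilinearMap ℂ (fun _ : Fin M => H) F} {Γ dΓ : (H →ₗ[ℂ] H) → (F →ₗ[ℂ] F)}

theorem adjoint_secondQuant [FiniteDimensional ℂ F]
    (hspan : Submodule.span ℂ (Set.range ⇑sym) = ⊤)
    (hinner : ∀ φ χ : Fin M → H,
      ⟪sym φ, sym χ⟫_ℂ = ∑ τ : Equiv.Perm (Fin M), ∏ i, ⟪φ i, χ (τ i)⟫_ℂ)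
    (hΓ : ∀ (O : H →ₗ[ℂ] H) (φ : Fin M → H), Γ O (sym φ) = sym (fun i => O (φ i)))
    (O : H →ₗ[ℂ] H) : LinearMap.adjoint (Γ O) = Γ (LinearMap.adjoint O) := by
  refine (LinearMap.eq_adjoint_of_span_range hspan _ _ fun φ χ => ?_).symm
  simp only [hΓ, hinner, LinearMap.adjoint_inner_left]

omit [FiniteDimensional ℂ H] in
theorem secondQuant_mul_dSecondQuant_mul (hspan : Submodule.span ℂ (Set.range ⇑sym) = ⊤)
    (hΓ : ∀ (O : H →ₗ[ℂ] H) (φ : Fin M → H), Γ O (sym φ) = sym (fun i => O (φ i)))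
    (hdΓ : ∀ (X : H →ₗ[ℂ] H) (φ : Fin M → H),
      dΓ X (sym φ) = ∑ m, sym (Function.update φ m (X (φ m))))
    {O O' : H →ₗ[ℂ] H} (hO : O' * O = 1) (X : H →ₗ[ℂ] H) :
    Γ O' * dΓ X * Γ O = dΓ (O' * X * O) := by
  have hO' : ∀ x, O' (O x) = x := LinearMap.congr_fun hO
  refine LinearMap.ext_on_range hspan fun φ => ?_
  simp only [Module.End.mul_apply, hΓ, hdΓ, map_sum]
  refine Finset.sum_congr rfl fun j _ => congrArg sym (funext fun i => ?_)
  rcases eq_or_ne i j with rfl | hij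
  · simp only [Function.update_self]
  · simp only [Function.update_of_ne hij, hO']

omit [FiniteDimensional ℂ H] in
theorem dSecondQuant_smul (hspan : Submodule.span ℂ (Set.range ⇑sym) = ⊤)
    (hdΓ : ∀ (X : H →ₗ[ℂ] H) (φ : Fin M → H),
      dΓ X (sym φ) = ∑ m, sym (Function.update φ m (X (φ m))))
    (c : ℂ) (X : H →ₗ[ℂ] H) : dΓ (c • X) = c • dΓ X :=
  LinearMap.ext_on_range hspan fun φ => by
    simp only [hdΓ, LinearMap.smul_apply, sym.map_update_smul, Finset.smul_sum]

end secondQuantization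

theorem stmt_15_general {N M : ℕ} {F : Type*} [NormedAddCommGroup F] [InnerProductSpace ℂ F]
    [FiniteDimensional ℂ F]
    (ψ : OrthonormalBasis (Fin N) ℂ H) (a : H)
    (sym : MultilinearMap ℂ (fun _ : Fin M => H) F)
    (hspan : Submodule.span ℂ (Set.range ⇑sym) = ⊤)
    (hinner : ∀ φ χ : Fin M → H,
      ⟪sym φ, sym χ⟫_ℂ = ∑ τ : Equiv.Perm (Fin M), ∏ i, ⟪φ i, χ (τ i)⟫_ℂ)
    (Γ : (H →ₗ[ℂ] H) → (F →ₗ[ℂ] F))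
    (hΓ : ∀ (O : H →ₗ[ℂ] H) (φ : Fin M → H), Γ O (sym φ) = sym (fun i => O (φ i)))
    (dΓ : (H →ₗ[ℂ] H) → (F →ₗ[ℂ] F))
    (hdΓ : ∀ (X : H →ₗ[ℂ] H) (φ : Fin M → H),
      dΓ X (sym φ) = ∑ m, sym (Function.update φ m (X (φ m))))
    (E : (F →ₗ[ℂ] F) →ₗ[ℂ] ℂ)
    (hinv : ∀ (θ : Fin N → ℝ) (X : F →ₗ[ℂ] F),
      E (LinearMap.adjoint (Γ (phaseU ψ θ)) * X * Γ (phaseU ψ θ)) = E X) :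
    ∀ m k : Fin N, m ≠ k →
      E (dΓ (rankOne (ψ m) (ψ m) * rankOne a a * rankOne (ψ k) (ψ k))) = 0 := by
  intro m k hmk
  have hdΓ_smul := dSecondQuant_smul hspan hdΓ
  have hX : rankOne (ψ m) (ψ m) * rankOne a a * rankOne (ψ k) (ψ k)
      = (⟪ψ m, a⟫_ℂ * ⟪a, ψ k⟫_ℂ) • rankOne (ψ m) (ψ k) := by
    rw [rankOne_mul_rankOne, smul_mul_assoc, rankOne_mul_rankOne, smul_smul]
  set θ : Fin N → ℝ := Pi.single k Real.pi
  have hflip : phaseU ψ (-θ) * rankOne (ψ m) (ψ k) * phaseU ψ θ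
      = (-1 : ℂ) • rankOne (ψ m) (ψ k) := by
    simp [phaseU_conj_rankOne, θ, hmk, exp_pi_mul_I]
  have h := hinv θ (dΓ (rankOne (ψ m) (ψ k)))
  rw [adjoint_secondQuant hspan hinner hΓ, adjoint_phaseU,
    secondQuant_mul_dSecondQuant_mul hspan hΓ hdΓ (phaseU_neg_mul_phaseU ψ θ), hflip,
    hdΓ_smul, map_smul, smul_eq_mul] at h
  have h_offdiag : E (dΓ (rankOne (ψ m) (ψ k))) = 0 := by linear_combination (-1 / 2 : ℂ) * h
  rw [hX, hdΓ_smul, map_smul, h_offdiag, smul_zero]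

/-- a linear functional on the operators of `Sym^M(H)` that is invariant under
conjugation by all `Γ(U_θ)`, `U_θ = Σ_k e^{iθ_k} p_{ψ_k}`, vanishes on all off-diagonal
operators `dΓ(p_{ψ_m} p_a p_{ψ_k})`, `m ≠ k`. -/
theorem stmt_15 {N M : ℕ} {F : Type*} [NormedAddCommGroup F] [InnerProductSpace ℂ F]
    [FiniteDimensional ℂ F]
    (ψ : OrthonormalBasis (Fin N) ℂ H) (a : H) (ha : ‖a‖ = 1)
    (sym : MultilinearMap ℂ (fun _ : Fin M => H) F)
    (hsymm : ∀ (φ : Fin M → H) (τ : Equiv.Perm (Fin M)), sym (φ ∘ τ) = sym φ)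
    (hspan : Submodule.span ℂ (Set.range ⇑sym) = ⊤)
    (hinner : ∀ φ χ : Fin M → H,
      ⟪sym φ, sym χ⟫_ℂ = ∑ τ : Equiv.Perm (Fin M), ∏ i, ⟪φ i, χ (τ i)⟫_ℂ)
    (Γ : (H →ₗ[ℂ] H) → (F →ₗ[ℂ] F))
    (hΓ : ∀ (O : H →ₗ[ℂ] H) (φ : Fin M → H), Γ O (sym φ) = sym (fun i => O (φ i)))
    (dΓ : (H →ₗ[ℂ] H) → (F →ₗ[ℂ] F))
    (hdΓ : ∀ (X : H →ₗ[ℂ] H) (φ : Fin M → H),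
      dΓ X (sym φ) = ∑ m, sym (Function.update φ m (X (φ m))))
    (E : (F →ₗ[ℂ] F) →ₗ[ℂ] ℂ)
    (hinv : ∀ (θ : Fin N → ℝ) (X : F →ₗ[ℂ] F),
      E (LinearMap.adjoint (Γ (phaseU ψ θ)) * X * Γ (phaseU ψ θ)) = E X) :
    ∀ m k : Fin N, m ≠ k →
      E (dΓ (rankOne (ψ m) (ψ m) * rankOne a a * rankOne (ψ k) (ψ k))) = 0 :=
  stmt_15_general ψ a sym hspan hinner Γ hΓ dΓ hdΓ E hinv
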